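/- arXiv:1406.3405 — 3 statements merged into one kernel-verified Lean document; each statement's English description precedes it below -/
import Mathlib

section
/- Let G be a context-free grammar in Chomsky normal form with weighted productions, where each production carries an error count in ℕ. If A →^{k} BC is a production, B derives the empty string with minimum total error count ℓ (i.e., B is nullable with Mnullcount(B) = ℓ), and C is not nullable, then adding the production A →^{k+ℓ} C preserves the minimum weighted derivation cost of every nonempty string from every nonterminal. -/
/-- One-step-closed weighted derivation relation for a weighted CFG given by a
production relation `P A γ c` (the production `A →^c γ` has error count `c`).
`Derives P α w c` means `α` derives `w` with total error count `c`. -/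
inductive Derives {N T : Type*} (P : N → List (N ⊕ T) → ℕ → Prop) :
    List (N ⊕ T) → List (N ⊕ T) → ℕ → Prop
  | refl (w : List (N ⊕ T)) : Derives P w w 0
  | step {α β γ w : List (N ⊕ T)} {A : N} {c₁ c₂ : ℕ} :
      P A γ c₂ → Derives P (α ++ γ ++ β) w c₁ →
      Derives P (α ++ [Sum.inl A] ++ β) w (c₁ + c₂)

/-- The minimum cost of deriving the terminal string `w` from nonterminal `A`. -/
noncomputable def minCost {N T : Type*} (P : N → List (N ⊕ T) → ℕ → Prop)
    (A : N) (w : List T) : ℕ∞ :=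
  sInf {c : ℕ∞ | ∃ m : ℕ, c = m ∧ Derives P [Sum.inl A] (w.map Sum.inr) m}

lemma Derives.mono {N T : Type*} {P Q : N → List (N ⊕ T) → ℕ → Prop}
    (h : ∀ A γ c, P A γ c → Q A γ c) {x w : List (N ⊕ T)} {c : ℕ}
    (hd : Derives P x w c) : Derives Q x w c := by
  induction hd with
  | refl w => exact .refl w
  | step hp _ ih => exact .step (h _ _ _ hp) ih

lemma Derives.trans' {N T : Type*} {P : N → List (N ⊕ T) → ℕ → Prop}
    {x y z : List (N ⊕ T)} {c₁ c₂ : ℕ}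
    (h1 : Derives P x y c₁) (h2 : Derives P y z c₂) :
    Derives P x z (c₁ + c₂) := by
  induction h1 with
  | refl => simpa using h2
  | @step α β γ w A c c' hp _ ih =>
      rw [Nat.add_right_comm]
      exact .step hp (ih h2)

lemma Derives.context {N T : Type*} {P : N → List (N ⊕ T) → ℕ → Prop}
    {γ w : List (N ⊕ T)} {c : ℕ} (l r : List (N ⊕ T))
    (h : Derives P γ w c) : Derives P (l ++ γ ++ r) (l ++ w ++ r) c := by
  induction h with
  | refl => exact .refl _
  | @step α β δ w A c₁ c₂ hp _ ih =>
      have h1 : l ++ (α ++ δ ++ β) ++ r = (l ++ α) ++ δ ++ (β ++ r) := by simp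
      have h2 : l ++ (α ++ [Sum.inl A] ++ β) ++ r
          = (l ++ α) ++ [Sum.inl A] ++ (β ++ r) := by simp
      rw [h2]
      exact .step hp (h1 ▸ ih)

lemma derives_elim {N T : Type*} {P : N → List (N ⊕ T) → ℕ → Prop}
    {A B C : N} {k ℓ : ℕ}
    (hprod : P A [Sum.inl B, Sum.inl C] k)
    (hε : Derives P [Sum.inl B] [] ℓ)
    {x w : List (N ⊕ T)} {m : ℕ}
    (h : Derives (fun X' rhs c => P X' rhs c ∨ (X' = A ∧ rhs = [Sum.inl C] ∧ c = k + ℓ))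
      x w m) : Derives P x w m := by
  induction h with
  | refl w => exact .refl w
  | @step α β γ w' A' c₁ c₂ hp _ ih =>
      rcases hp with hp | ⟨rfl, rfl, rfl⟩
      · exact .step hp ih
      · have hctx := Derives.context α ([Sum.inl C] ++ β) hε
        have e1 : α ++ [Sum.inl B] ++ ([Sum.inl C] ++ β)
            = α ++ [Sum.inl B, Sum.inl C] ++ β := by simp
        have e2 : α ++ ([] : List (N ⊕ T)) ++ ([Sum.inl C] ++ β)
            = α ++ [Sum.inl C] ++ β := by simp
        rw [e1, e2] at hctx
        have h1 : Derives P (α ++ [Sum.inl B, Sum.inl C] ++ β) w' (ℓ + c₁) :=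
          hctx.trans' ih
        have hc : c₁ + (k + ℓ) = (ℓ + c₁) + k := by omega
        rw [hc]
        exact .step hprod h1

/-- If `A →^k BC` is a production, `B` is nullable with minimum nullcount `ℓ`, and `C`
is not nullable, then adding the production `A →^{k+ℓ} C` preserves the minimum
weighted derivation cost of every nonempty string from every nonterminal. -/
theorem add_eps_elim_production_preserves_minCost {N T : Type*}
    (P : N → List (N ⊕ T) → ℕ → Prop) (A B C : N) (k ℓ : ℕ)
    (hprod : P A [Sum.inl B, Sum.inl C] k)
    (hBnull : ∃ m : ℕ, Derives P [Sum.inl B] [] m)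
    (hBmin : sInf {c : ℕ∞ | ∃ m : ℕ, c = m ∧ Derives P [Sum.inl B] [] m} = (ℓ : ℕ∞))
    (hCnotnull : ¬ ∃ m : ℕ, Derives P [Sum.inl C] [] m) :
    ∀ (X : N) (w : List T), w ≠ [] →
      minCost (fun X' rhs c => P X' rhs c ∨ (X' = A ∧ rhs = [Sum.inl C] ∧ c = k + ℓ)) X w
        = minCost P X w := by
  -- first extract a minimum-cost null derivation for B of cost exactly ℓ
  have hT : {m : ℕ | Derives P [Sum.inl B] [] m}.Nonempty := hBnull
  have hm₀ : Derives P [Sum.inl B] [] (sInf {m : ℕ | Derives P [Sum.inl B] [] m}) :=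
    Nat.sInf_mem hT
  set m₀ := sInf {m : ℕ | Derives P [Sum.inl B] [] m} with hm₀def
  have hs : sInf {c : ℕ∞ | ∃ m : ℕ, c = m ∧ Derives P [Sum.inl B] [] m} = (m₀ : ℕ∞) := by
    apply le_antisymm
    · exact sInf_le ⟨m₀, rfl, hm₀⟩
    · apply le_sInf
      rintro c ⟨m, rfl, hd⟩
      exact_mod_cast Nat.sInf_le hd
  have hℓ : ℓ = m₀ := by
    have := hs.symm.trans hBmin
    exact_mod_cast this.symm
  have hε : Derives P [Sum.inl B] [] ℓ := hℓ ▸ hm₀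
  intro X w _
  unfold minCost
  congr 1
  ext c
  constructor
  · rintro ⟨m, rfl, hd⟩
    exact ⟨m, rfl, derives_elim hprod hε hd⟩
  · rintro ⟨m, rfl, hd⟩
    exact ⟨m, rfl, hd.mono (fun _ _ _ hp => Or.inl hp)⟩
end

section
/- Correctness of the weighted CYK algorithm: for a weighted CFG G' in Chomsky normal form (productions A →^m BC and A →^m a with error counts m ∈ ℕ) and input string a₁...aₙ, define tables D(i,j,A) by D(i,i+1,A) = min{m : (A →^m aᵢ) ∈ P'} and D(i,j,A) = min over productions A →^m BC and i < k < j of m + D(i,k,B) + D(k,j,C). Then D(i,j,A) equals the minimum total error count ℓ such that A ⇒*_{ℓ} aᵢ...a_{j-1}, or ∞ if no derivation exists. -/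
/-- The production relation of a weighted CNF grammar with binary rules
`R2 A B C m` (i.e. `A →^m BC`) and terminal rules `R1 A a m` (i.e. `A →^m a`). -/
def cnfProds {N T : Type*} (R2 : N → N → N → ℕ → Prop) (R1 : N → T → ℕ → Prop) :
    N → List (N ⊕ T) → ℕ → Prop := fun A rhs m =>
  (∃ B C : N, rhs = [Sum.inl B, Sum.inl C] ∧ R2 A B C m) ∨
  (∃ a : T, rhs = [Sum.inr a] ∧ R1 A a m)

theorem List.exists_of_append_eq_append_singleton_append {X : Type*} {u u' α β : List X} {A : X}
    (h : u ++ u' = α ++ [A] ++ β) :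
    (∃ β', u = α ++ [A] ++ β' ∧ β = β' ++ u') ∨ (∃ α', u' = α' ++ [A] ++ β ∧ α = u ++ α') := by
  rw [List.append_assoc, List.singleton_append, List.append_eq_append_iff] at h
  rcases h with ⟨α', rfl, rfl⟩ | ⟨c, rfl, hc⟩
  · exact Or.inr ⟨α', by simp, rfl⟩
  · rcases List.cons_eq_append_iff.mp hc with ⟨rfl, rfl⟩ | ⟨β', rfl, rfl⟩
    · exact Or.inr ⟨[], by simp, by simp⟩
    · exact Or.inl ⟨β', by simp, rfl⟩

theorem List.extract_append_extract {α : Type*} (l : List α) {i k j : ℕ} (hik : i ≤ k)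
    (hkj : k ≤ j) : l.extract i k ++ l.extract k j = l.extract i j := by
  simp only [List.extract_eq_take_drop]
  rw [show j - i = (k - i) + (j - k) by omega, List.take_add, List.drop_drop,
    Nat.add_sub_cancel' hik]

namespace Derives

variable {N T : Type*} {P : N → List (N ⊕ T) → ℕ → Prop}

theorem single {A : N} {γ : List (N ⊕ T)} {c : ℕ} (h : P A γ c) :
    Derives P [Sum.inl A] γ c := by
  simpa using Derives.step (α := []) (β := []) h (.refl _)

theorem trans {u v x : List (N ⊕ T)} {c d : ℕ}
    (h₁ : Derives P u v c) (h₂ : Derives P v x d) : Derives P u x (c + d) := by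
  induction h₁ with
  | refl => simpa using h₂
  | step hp _ ih => rw [add_right_comm]; exact .step hp (ih h₂)

theorem append_right {u v : List (N ⊕ T)} {c : ℕ} (h : Derives P u v c) (r : List (N ⊕ T)) :
    Derives P (u ++ r) (v ++ r) c := by
  induction h with
  | refl => exact .refl _
  | step hp _ ih => simpa using Derives.step hp (by simpa using ih)

theorem append_left {u v : List (N ⊕ T)} {c : ℕ} (l : List (N ⊕ T)) (h : Derives P u v c) :
    Derives P (l ++ u) (l ++ v) c := by
  induction h with
  | refl => exact .refl _
  | @step α β γ x A c₁ c₂ hp _ ih =>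
    simpa using Derives.step (α := l ++ α) hp (by simpa using ih)

theorem append {u u' v v' : List (N ⊕ T)} {c c' : ℕ}
    (h : Derives P u v c) (h' : Derives P u' v' c') : Derives P (u ++ u') (v ++ v') (c + c') :=
  (h.append_right u').trans (h'.append_left v)

theorem exists_of_append {u u' x : List (N ⊕ T)} {c : ℕ} (h : Derives P (u ++ u') x c) :
    ∃ v v' c₁ c₂, x = v ++ v' ∧ c = c₁ + c₂ ∧ Derives P u v c₁ ∧ Derives P u' v' c₂ := by
  generalize hw : u ++ u' = z at h
  induction h generalizing u u' with
  | refl => exact ⟨u, u', 0, 0, hw.symm, rfl, .refl _, .refl _⟩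
  | @step α β γ x A c₁ c₂ hp _ ih =>
    rcases List.exists_of_append_eq_append_singleton_append hw with
      ⟨β', rfl, rfl⟩ | ⟨α', rfl, rfl⟩
    · obtain ⟨v, v', d₁, d₂, rfl, rfl, hd₁, hd₂⟩ := ih (u := α ++ γ ++ β') (u' := u') (by simp)
      exact ⟨v, v', d₁ + c₂, d₂, rfl, by ring, .step hp hd₁, hd₂⟩
    · obtain ⟨v, v', d₁, d₂, rfl, rfl, hd₁, hd₂⟩ := ih (u := u) (u' := α' ++ γ ++ β) (by simp)
      exact ⟨v, v', d₁, d₂ + c₂, rfl, by ring, hd₁, .step hp hd₂⟩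

theorem eq_of_map_inr {u : List T} {v : List (N ⊕ T)} {c : ℕ}
    (h : Derives P (u.map Sum.inr) v c) : v = u.map Sum.inr ∧ c = 0 := by
  generalize hw : u.map Sum.inr = z at h
  cases h with
  | refl => exact ⟨rfl, rfl⟩
  | @step α β γ x A =>
    have : Sum.inl A ∈ u.map Sum.inr := by simp [hw]
    simp at this

theorem exists_first_step {A : N} {u : List T} {c : ℕ}
    (h : Derives P [Sum.inl A] (u.map Sum.inr) c) :
    ∃ γ c₁ c₂, P A γ c₂ ∧ Derives P γ (u.map Sum.inr) c₁ ∧ c = c₁ + c₂ := by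
  generalize hw : [Sum.inl A] = z at h
  cases h with
  | refl => cases u <;> simp at hw
  | @step α β γ x A' c₁ c₂ hp hd =>
    obtain ⟨rfl, rfl, rfl⟩ : α = [] ∧ A' = A ∧ β = [] := by
      simpa [List.singleton_eq_append_iff] using hw
    exact ⟨γ, c₁, c₂, hp, by simpa using hd, rfl⟩

end Derives

section CNF

variable {N T : Type*} {R2 : N → N → N → ℕ → Prop} {R1 : N → T → ℕ → Prop}

theorem Derives.length_le_of_cnfProds {u v : List (N ⊕ T)} {c : ℕ}
    (h : Derives (cnfProds R2 R1) u v c) : u.length ≤ v.length := by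
  induction h with
  | refl => rfl
  | @step α β γ x A c₁ c₂ hp _ ih =>
    have : 1 ≤ γ.length := by rcases hp with ⟨B, C, rfl, -⟩ | ⟨a, rfl, -⟩ <;> simp
    simp only [List.length_append, List.length_singleton] at ih ⊢
    omega

theorem ne_nil_of_derives_cnfProds {A : N} {u : List T} {c : ℕ}
    (h : Derives (cnfProds R2 R1) [Sum.inl A] (u.map Sum.inr) c) : u ≠ [] := by
  rintro rfl
  simpa using h.length_le_of_cnfProds

theorem derives_cnfProds_cases {A : N} {u : List T} {c : ℕ}
    (h : Derives (cnfProds R2 R1) [Sum.inl A] (u.map Sum.inr) c) :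
    (∃ a, u = [a] ∧ R1 A a c) ∨
    ∃ (B C : N) (m : ℕ) (u₁ u₂ : List T) (c₁ c₂ : ℕ), R2 A B C m ∧ u = u₁ ++ u₂ ∧
      Derives (cnfProds R2 R1) [Sum.inl B] (u₁.map Sum.inr) c₁ ∧
      Derives (cnfProds R2 R1) [Sum.inl C] (u₂.map Sum.inr) c₂ ∧ c = m + c₁ + c₂ := by
  obtain ⟨γ, c₁, c₂, hp, hd, rfl⟩ := h.exists_first_step
  rcases hp with ⟨B, C, rfl, hR⟩ | ⟨a, rfl, hR⟩
  · obtain ⟨v₁, v₂, d₁, d₂, hv, rfl, hd₁, hd₂⟩ :=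
      Derives.exists_of_append (u := [Sum.inl B]) (u' := [Sum.inl C]) hd
    obtain ⟨u₁, u₂, rfl, rfl, rfl⟩ := List.map_eq_append_iff.mp hv
    exact Or.inr ⟨B, C, c₂, u₁, u₂, d₁, d₂, hR, rfl, hd₁, hd₂, by ring⟩
  · obtain ⟨hv, rfl⟩ := Derives.eq_of_map_inr (u := [a]) hd
    obtain rfl : u = [a] := List.map_injective_iff.mpr Sum.inr_injective hv
    exact Or.inl ⟨a, rfl, by simpa using hR⟩

theorem Derives.binary_of_cnfProds {A B C : N} {m c₁ c₂ : ℕ} {v₁ v₂ : List (N ⊕ T)}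
    (hR : R2 A B C m) (h₁ : Derives (cnfProds R2 R1) [Sum.inl B] v₁ c₁)
    (h₂ : Derives (cnfProds R2 R1) [Sum.inl C] v₂ c₂) :
    Derives (cnfProds R2 R1) [Sum.inl A] (v₁ ++ v₂) (m + c₁ + c₂) := by
  have h := (Derives.single (P := cnfProds R2 R1) (Or.inl ⟨B, C, rfl, hR⟩)).trans (h₁.append h₂)
  rwa [← add_assoc] at h

end CNF

section MinCost

variable {N T : Type*} {P : N → List (N ⊕ T) → ℕ → Prop}

theorem minCost_le {A : N} {u : List T} {c : ℕ}
    (h : Derives P [Sum.inl A] (u.map Sum.inr) c) : minCost P A u ≤ c :=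
  sInf_le ⟨c, rfl, h⟩

theorem le_minCost {A : N} {u : List T} {x : ℕ∞}
    (h : ∀ c : ℕ, Derives P [Sum.inl A] (u.map Sum.inr) c → x ≤ c) : x ≤ minCost P A u :=
  le_sInf fun _ ⟨c, hc, hd⟩ => hc ▸ h c hd

theorem exists_derives_of_minCost_ne_top {A : N} {u : List T} (h : minCost P A u ≠ ⊤) :
    ∃ c : ℕ, minCost P A u = c ∧ Derives P [Sum.inl A] (u.map Sum.inr) c := by
  have hne : {c : ℕ∞ | ∃ m : ℕ, c = m ∧ Derives P [Sum.inl A] (u.map Sum.inr) m}.Nonempty :=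
    Set.nonempty_iff_ne_empty.mpr fun he => h (by rw [minCost, he, sInf_empty])
  -- `ℕ∞` is well-ordered, so the infimum of a nonempty set is attained.
  obtain ⟨c, hc, hd⟩ := csInf_mem hne
  exact ⟨c, hc, hd⟩

variable {R2 : N → N → N → ℕ → Prop} {R1 : N → T → ℕ → Prop}

theorem minCost_cnfProds_singleton (A : N) (a : T) :
    minCost (cnfProds R2 R1) A [a] = sInf {c : ℕ∞ | ∃ m : ℕ, c = m ∧ R1 A a m} := by
  refine congrArg sInf (Set.ext fun c => exists_congr fun m => and_congr_right fun _ => ?_)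
  refine ⟨fun h => ?_, fun h => by simpa using Derives.single (Or.inr ⟨a, rfl, h⟩)⟩
  rcases derives_cnfProds_cases h with ⟨b, hb, hR⟩ | ⟨_, _, _, u₁, u₂, _, _, -, hu, h₁, h₂, -⟩
  · rwa [List.singleton_inj.mp hb]
  · have hlen := congrArg List.length hu
    have hlen₁ := List.length_pos_iff.mpr (ne_nil_of_derives_cnfProds h₁)
    have hlen₂ := List.length_pos_iff.mpr (ne_nil_of_derives_cnfProds h₂)
    simp only [List.length_singleton, List.length_append] at hlen
    omega

theorem minCost_cnfProds_append_le {A B C : N} {m : ℕ} (hR : R2 A B C m) (u₁ u₂ : List T) :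
    minCost (cnfProds R2 R1) A (u₁ ++ u₂) ≤
      m + minCost (cnfProds R2 R1) B u₁ + minCost (cnfProds R2 R1) C u₂ := by
  by_cases hB : minCost (cnfProds R2 R1) B u₁ = ⊤
  · simp [hB]
  by_cases hC : minCost (cnfProds R2 R1) C u₂ = ⊤
  · simp [hC]
  obtain ⟨c₁, hc₁, h₁⟩ := exists_derives_of_minCost_ne_top hB
  obtain ⟨c₂, hc₂, h₂⟩ := exists_derives_of_minCost_ne_top hC
  rw [hc₁, hc₂]
  have h := Derives.binary_of_cnfProds hR h₁ h₂
  rw [← List.map_append] at h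
  exact_mod_cast minCost_le h

-- `w.extract i j` is `(w.drop i).take (j - i)`, the substring `aᵢ ⋯ a_{j-1}`.
theorem minCost_cnfProds_extract (w : List T) (A : N) {i j : ℕ} (hij : i + 2 ≤ j)
    (hj : j ≤ w.length) :
    minCost (cnfProds R2 R1) A (w.extract i j) =
      sInf {c : ℕ∞ | ∃ (B C : N) (m k : ℕ), R2 A B C m ∧ i < k ∧ k < j ∧
        c = (m : ℕ∞) + minCost (cnfProds R2 R1) B (w.extract i k) +
          minCost (cnfProds R2 R1) C (w.extract k j)} := by
  refine le_antisymm (le_sInf ?_) (le_minCost fun c h => ?_)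
  · rintro _ ⟨B, C, m, k, hR, hik, hkj, rfl⟩
    rw [← w.extract_append_extract hik.le hkj.le]
    exact minCost_cnfProds_append_le hR _ _
  · have hlen : (w.extract i j).length = j - i := by simp; omega
    rcases derives_cnfProds_cases h with
      ⟨a, ha, -⟩ | ⟨B, C, m, u₁, u₂, c₁, c₂, hR, hu, h₁, h₂, rfl⟩
    · have := congrArg List.length ha
      simp only [hlen, List.length_singleton] at this
      omega
    have hlen₁ := List.length_pos_iff.mpr (ne_nil_of_derives_cnfProds h₁)
    have hlen₂ := List.length_pos_iff.mpr (ne_nil_of_derives_cnfProds h₂)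
    have hlen₁₂ : u₁.length + u₂.length = j - i := by rw [← hlen, hu, List.length_append]
    obtain ⟨k, hk⟩ : ∃ k, k = i + u₁.length := ⟨_, rfl⟩
    obtain ⟨rfl, rfl⟩ : w.extract i k = u₁ ∧ w.extract k j = u₂ :=
      List.append_inj (by rw [w.extract_append_extract (by omega) (by omega), hu])
        (by simp; omega)
    refine le_trans (sInf_le ⟨B, C, m, k, hR, by omega, by omega, rfl⟩) ?_
    push_cast
    gcongr
    exacts [minCost_le h₁, minCost_le h₂]

end MinCost

/-- Correctness of the weighted CYK algorithm: if the table `D` satisfies the CYK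
recurrences (base case on single terminals, and minimization over binary productions
and split points), then `D i j A` is the minimum total error count of a weighted
derivation of `a_i ⋯ a_{j-1}` from `A` (and `∞` if no derivation exists). -/
theorem weighted_CYK_correct {N T : Type*}
    (R2 : N → N → N → ℕ → Prop) (R1 : N → T → ℕ → Prop) (w : List T)
    (D : ℕ → ℕ → N → ℕ∞)
    (hbase : ∀ (i : ℕ) (A : N) (h : i < w.length),
      D i (i + 1) A = sInf {c : ℕ∞ | ∃ m : ℕ, c = m ∧ R1 A (w.get ⟨i, h⟩) m})
    (hstep : ∀ (i j : ℕ) (A : N), i + 2 ≤ j → j ≤ w.length →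
      D i j A = sInf {c : ℕ∞ | ∃ (B C : N) (m k : ℕ), R2 A B C m ∧ i < k ∧ k < j ∧
        c = (m : ℕ∞) + D i k B + D k j C}) :
    ∀ (i j : ℕ) (A : N), i < j → j ≤ w.length →
      D i j A = minCost (cnfProds R2 R1) A ((w.drop i).take (j - i)) := by
  suffices key : ∀ n i j A, j - i = n → i < j → j ≤ w.length →
      D i j A = minCost (cnfProds R2 R1) A (w.extract i j) from
    fun i j A hij hj => key _ i j A rfl hij hj
  intro n
  induction n using Nat.strong_induction_on with
  | _ n ih =>
    intro i j A hn hij hj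
    rcases (show j = i + 1 ∨ i + 2 ≤ j by omega) with rfl | hij₂
    · rw [hbase i A hj, List.extract_eq_take_drop, Nat.add_sub_cancel_left,
        List.take_one_drop_eq_of_lt_length hj, minCost_cnfProds_singleton]
    · rw [hstep i j A hij₂ hj, minCost_cnfProds_extract w A hij₂ hj]
      refine congrArg sInf (Set.ext fun c => exists₄_congr fun B C m k => ?_)
      refine and_congr_right fun _ => and_congr_right fun hik => and_congr_right fun hkj => ?_
      rw [ih (k - i) (by omega) i k B rfl hik (by omega), ih (j - k) (by omega) k j C rfl hkj hj]
end

section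
/- The special matrix product over sets of (nonterminal, cost) pairs reduces to tropical matrix multiplication: for matrices a, b with entries being sets of (nonterminal, cost) pairs, define for each nonterminal B the ℕ∪{∞}-matrix a_B by a_B[i,j] = ℓ if (B,ℓ) ∈ a[i,j] and ∞ otherwise, similarly b_C. Then the product c = a·b (with c_{ij} = ∪_k a_{ik} ⊙ b_{kj}) satisfies: (A,q) ∈ c[i,j] if and only if q = min over productions A →^m BC of m + (a_B ⊗ b_C)[i,j] and this minimum is finite, where ⊗ denotes the tropical product. -/
open Classical in
/-- The product `⊙` with respect to a finite set `P'` of weighted binary productions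
`(A, B, C, m)` meaning `A →^m BC`. -/
noncomputable def odot {N : Type*} (P' : Finset (N × N × N × ℕ))
    (f g : N → Option ℕ) : N → Option ℕ := fun A =>
  let s : Set ℕ := {v | ∃ B C m k ℓ, (A, B, C, m) ∈ P' ∧ f B = some k ∧ g C = some ℓ ∧
    v = k + ℓ + m}
  if s.Nonempty then some (sInf s) else none

open Classical in
/-- Indexed min-union of a family of sets of (nonterminal, cost) pairs. -/
noncomputable def bigU {N ι : Type*} (f : ι → N → Option ℕ) : N → Option ℕ := fun A =>
  if {v : ℕ | ∃ i, f i A = some v}.Nonempty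
  then some (sInf {v : ℕ | ∃ i, f i A = some v}) else none

/-- Matrix product over the min-union/⊙ structure: `c i j = ⋃ₖ (a i k) ⊙ (b k j)`. -/
noncomputable def matmul {N : Type*} {n : ℕ} (P' : Finset (N × N × N × ℕ))
    (a b : Fin n → Fin n → N → Option ℕ) : Fin n → Fin n → N → Option ℕ :=
  fun i j => bigU (fun k => odot P' (a i k) (b k j))

/-- For a nonterminal `B`, the `ℕ∞`-matrix `a_B` with `a_B[i,j] = ℓ` if `(B,ℓ) ∈ a[i,j]`
and `∞` otherwise. -/
def matOf {N : Type*} {n : ℕ} (a : Fin n → Fin n → N → Option ℕ) (B : N) :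
    Matrix (Fin n) (Fin n) ℕ∞ := fun i j => (a i j B).elim ⊤ (fun ℓ => (ℓ : ℕ∞))

/-- Tropical (min-plus) product of matrices over `ℕ ∪ {∞}`. -/
noncomputable def tropMul {n : ℕ} (X Y : Matrix (Fin n) (Fin n) ℕ∞) :
    Matrix (Fin n) (Fin n) ℕ∞ := fun i j => ⨅ k, (X i k + Y k j)

/-!
Read an absent pair as cost `∞`: a cost set `N → Option ℕ` becomes `N → ℕ∞`, and both the
min-union and `⊙` become infima in `ℕ∞`. The entry `(a·b)[i,j]` at `A` is then
`⨅ₖ ⨅_{A →^m BC} (a_B[i,k] + b_C[k,j] + m)`; since adding a constant commutes with infima in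
`ℕ∞`, exchanging the two infima yields `⨅_{A →^m BC} (m + (a_B ⊗ b_C)[i,j])`. Comparing finite
values gives the claim.
-/

namespace Option

def toENat (o : Option ℕ) : ℕ∞ := o.elim ⊤ (↑)

@[simp] lemma toENat_none : (none : Option ℕ).toENat = ⊤ := rfl

@[simp] lemma toENat_some (n : ℕ) : (some n).toENat = n := rfl

lemma toENat_eq_natCast_iff {o : Option ℕ} {n : ℕ} : o.toENat = n ↔ o = some n := by
  cases o <;> simp

lemma toENat_eq_iInf (o : Option ℕ) : o.toENat = ⨅ (n : ℕ) (_ : o = some n), (n : ℕ∞) := by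
  cases o <;> simp

lemma toENat_ite_sInf (s : Set ℕ) [Decidable s.Nonempty] :
    (if s.Nonempty then some (sInf s) else none).toENat = ⨅ n ∈ s, (n : ℕ∞) := by
  split_ifs with h
  · exact ENat.natCast_sInf h
  · simp [Set.not_nonempty_iff_eq_empty.mp h]

end Option

lemma toENat_bigU {N ι : Type*} (f : ι → N → Option ℕ) (A : N) :
    (bigU f A).toENat = ⨅ i, (f i A).toENat := by
  rw [bigU, Option.toENat_ite_sInf]
  simp_rw [Option.toENat_eq_iInf, Set.mem_ofPred_eq, iInf_exists]
  exact iInf_comm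

lemma toENat_odot {N : Type*} (P' : Finset (N × N × N × ℕ)) (f g : N → Option ℕ) (A : N) :
    (odot P' f g A).toENat =
      ⨅ (B) (C) (m) (_ : (A, B, C, m) ∈ P'), (f B).toENat + (g C).toENat + m := by
  rw [odot, Option.toENat_ite_sInf]
  refine eq_of_forall_le_iff fun c => ?_
  simp only [le_iInf_iff, Option.toENat_eq_iInf, ENat.iInf₂_add, ENat.add_iInf₂,
    Set.mem_ofPred_eq, forall_exists_index, and_imp]
  constructor
  · intro h B C m hm ℓ hg k hf
    exact_mod_cast h _ B C m k ℓ hm hf hg rfl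
  · rintro h _ B C m k ℓ hm hf hg rfl
    exact_mod_cast h B C m hm ℓ hg k hf

lemma sInf_setOf_mem_eq_iInf {N : Type*} (P' : Finset (N × N × N × ℕ)) (A : N)
    (F : N → N → ℕ → ℕ∞) :
    sInf {c : ℕ∞ | ∃ B C m, (A, B, C, m) ∈ P' ∧ c = F B C m} =
      ⨅ (B) (C) (m) (_ : (A, B, C, m) ∈ P'), F B C m := by
  refine eq_of_forall_le_iff fun c => ?_
  simp only [le_iInf_iff, le_sInf_iff, Set.mem_ofPred_eq, forall_exists_index, and_imp]
  exact ⟨fun h B C m hm => h _ B C m hm rfl, fun h _ B C m hm e => e ▸ h B C m hm⟩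

lemma matOf_apply {N : Type*} {n : ℕ} (a : Fin n → Fin n → N → Option ℕ) (B : N)
    (i j : Fin n) :
    matOf a B i j = (a i j B).toENat :=
  rfl

lemma toENat_matmul {N : Type*} {n : ℕ} (P' : Finset (N × N × N × ℕ))
    (a b : Fin n → Fin n → N → Option ℕ) (A : N) (i j : Fin n) :
    (matmul P' a b i j A).toENat = sInf {c : ℕ∞ | ∃ B C m, (A, B, C, m) ∈ P' ∧
      c = (m : ℕ∞) + tropMul (matOf a B) (matOf b C) i j} := by
  rw [sInf_setOf_mem_eq_iInf]
  calc (matmul P' a b i j A).toENat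
      = ⨅ (k) (B) (C) (m) (_ : (A, B, C, m) ∈ P'), matOf a B i k + matOf b C k j + m := by
        simp only [matmul, toENat_bigU, toENat_odot, matOf_apply]
    _ = ⨅ (B) (C) (m) (_ : (A, B, C, m) ∈ P'), tropMul (matOf a B) (matOf b C) i j + m := by
        simp only [tropMul, ENat.iInf_add, iInf_comm (ι := Fin n)]
    _ = _ := by simp only [add_comm]

/-- The special matrix product over sets of (nonterminal, cost) pairs reduces to
tropical matrix multiplication: `(A, q)` belongs to `(a ⋅ b)[i,j]` iff `q` is the
(finite) minimum over productions `A →^m BC` of `m + (a_B ⊗ b_C)[i,j]`. -/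
theorem matmul_reduces_to_tropical {N : Type*} {n : ℕ}
    (P' : Finset (N × N × N × ℕ)) (a b : Fin n → Fin n → N → Option ℕ) :
    ∀ (A : N) (i j : Fin n) (q : ℕ),
      matmul P' a b i j A = some q ↔
        sInf {c : ℕ∞ | ∃ B C m, (A, B, C, m) ∈ P' ∧
          c = (m : ℕ∞) + tropMul (matOf a B) (matOf b C) i j} = (q : ℕ∞) := by
  intro A i j q
  rw [← toENat_matmul, Option.toENat_eq_natCast_iff]
end
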